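/- In every 3-uniform hypergraph H that contains no copy of K₄⁻ and no copy of C₅⁻, if H is the set of cyclic triangles of a tournament T that contains no copy of the tournament D₅, then for every vertex v, every connected component of the link graph of v is a complete bipartite graph. -/

import Mathlib

/-!
Every edge of the link of `v` joins an out-neighbour `x` of `v` to an in-neighbour `y` with
`x → y`, so the link is properly 2-coloured by "is an in-neighbour of `v`". The forbidden `C₅⁻`
and `D₅` force every path `a b c d` of the link to close up to an edge `a d`; hence every walk
of odd length in the link joins adjacent vertices, i.e. any two vertices of one component that
lie on opposite sides are adjacent.
-/

def IsTournament {V : Type*} (r : V → V → Prop) : Prop :=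
  (∀ v, ¬ r v v) ∧ ∀ u v : V, u ≠ v → (r u v ↔ ¬ r v u)

/-- `{x, y, z}` is a cyclic triangle of the tournament `r` (as an unordered triple). -/
def Cyc {V : Type*} (r : V → V → Prop) (x y z : V) : Prop :=
  (r x y ∧ r y z ∧ r z x) ∨ (r y x ∧ r z y ∧ r x z)

/-- The link graph of `v` in the 3-graph of cyclic triangles of `r`:
`x ∼ y` iff `{v, x, y}` is a cyclic triangle. -/
def linkGraph {V : Type*} (r : V → V → Prop) (v : V) : SimpleGraph V :=
  SimpleGraph.fromRel (fun x y => r v x ∧ r x y ∧ r y v)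

namespace SimpleGraph

variable {α : Type*} {G : SimpleGraph α}

theorem Walk.adj_of_odd_length
    (hG : ∀ ⦃a b c d⦄, G.Adj a b → G.Adj b c → G.Adj c d → G.Adj a d)
    {x y : α} (p : G.Walk x y) (hp : Odd p.length) : G.Adj x y := by
  suffices ∀ {x y : α} (p : G.Walk x y),
      (Odd p.length → G.Adj x y) ∧ (Even p.length → ∀ z, G.Adj z x → G.Adj z y) from
    (this p).1 hp
  intro x y p
  induction p with
  | nil => simp
  | cons h _ ih =>
    rw [Walk.length_cons, Nat.odd_add_one, Nat.even_add_one, Nat.not_odd_iff_even,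
      Nat.not_even_iff_odd]
    exact ⟨fun heven => ih.2 heven _ h, fun hodd z hz => hG hz h (ih.1 hodd)⟩

end SimpleGraph

namespace IsTournament

variable {V : Type*} {r : V → V → Prop}

lemma ne_of_rel (hr : IsTournament r) {x y : V} (h : r x y) : x ≠ y := by
  rintro rfl
  exact hr.1 x h

lemma asymm (hr : IsTournament r) {x y : V} (h : r x y) : ¬ r y x :=
  (hr.2 x y (hr.ne_of_rel h)).mp h

lemma rel_or_rel (hr : IsTournament r) {x y : V} (hne : x ≠ y) : r x y ∨ r y x :=
  (em (r x y)).imp_right (hr.2 y x hne.symm).mpr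

end IsTournament

section Link

variable {V : Type*} {r : V → V → Prop}

def D5Free (r : V → V → Prop) : Prop :=
  ¬ ∃ a b c d e : V,
    r a b ∧ r a c ∧ r d a ∧ r e a ∧ r b c ∧ r b d ∧ r b e ∧ r c d ∧ r e c ∧ r e d

def C5MinusFree (r : V → V → Prop) : Prop :=
  ¬ ∃ v0 v1 v2 v3 v4 : V, v1 ≠ v4 ∧
    Cyc r v0 v1 v2 ∧ Cyc r v1 v2 v3 ∧ Cyc r v2 v3 v4 ∧ Cyc r v3 v4 v0

/-- If `d → a` instead, the orientation of `ac` and `bd` produces a `C₅⁻` or a `D₅`. -/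
lemma rel_of_link_path (hr : IsTournament r) (hD5 : D5Free r) (hC5 : C5MinusFree r)
    {v a b c d : V} (hva : r v a) (hab : r a b) (hbv : r b v)
    (hvc : r v c) (hcb : r c b) (hcd : r c d) (hdv : r d v) : r a d := by
  by_cases hac : a = c
  · exact hac ▸ hcd
  by_cases hbd : b = d
  · exact hbd ▸ hab
  by_contra had
  have had' : a ≠ d := by
    rintro rfl
    exact hr.asymm hva hdv
  have hda : r d a := (hr.rel_or_rel had').resolve_left had
  rcases hr.rel_or_rel hac with hac' | hca
  · exact hC5 ⟨a, b, v, c, d, hbd, .inl ⟨hab, hbv, hva⟩, .inl ⟨hbv, hvc, hcb⟩,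
      .inl ⟨hvc, hcd, hdv⟩, .inl ⟨hcd, hda, hac'⟩⟩
  rcases hr.rel_or_rel hbd with hbd' | hdb
  · exact hC5 ⟨d, a, b, v, c, hac, .inl ⟨hda, hab, hbd'⟩, .inl ⟨hab, hbv, hva⟩,
      .inl ⟨hbv, hvc, hcb⟩, .inl ⟨hvc, hcd, hdv⟩⟩
  · exact hD5 ⟨v, c, a, b, d, hvc, hva, hbv, hdv, hca, hcb, hcd, hab, hda, hdb⟩

lemma linkGraph_adj (hr : IsTournament r) {v x y : V} :
    (linkGraph r v).Adj x y ↔ (r v x ∧ r x y ∧ r y v) ∨ (r v y ∧ r y x ∧ r x v) := by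
  rw [linkGraph, SimpleGraph.fromRel_adj]
  exact and_iff_right_of_imp fun h =>
    h.elim (fun h => hr.ne_of_rel h.2.1) fun h => (hr.ne_of_rel h.2.1).symm

lemma linkGraph_adj_iff_of_out (hr : IsTournament r) {v x y : V} (hvx : r v x) :
    (linkGraph r v).Adj x y ↔ r x y ∧ r y v := by
  rw [linkGraph_adj hr]
  exact ⟨fun h => h.elim (·.2) fun h => absurd h.2.2 (hr.asymm hvx), fun h => .inl ⟨hvx, h⟩⟩

lemma linkGraph_adj_iff_of_in (hr : IsTournament r) {v x y : V} (hxv : r x v) :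
    (linkGraph r v).Adj x y ↔ r v y ∧ r y x := by
  rw [linkGraph_adj hr]
  exact ⟨fun h => h.elim (fun h => absurd h.1 (hr.asymm hxv)) fun h => ⟨h.1, h.2.1⟩,
    fun h => .inr ⟨h.1, h.2, hxv⟩⟩

lemma linkGraph_adj_of_path (hr : IsTournament r) (hD5 : D5Free r) (hC5 : C5MinusFree r)
    {v : V} ⦃a b c d : V⦄ (hab : (linkGraph r v).Adj a b) (hbc : (linkGraph r v).Adj b c)
    (hcd : (linkGraph r v).Adj c d) : (linkGraph r v).Adj a d := by
  wlog hva : r v a generalizing a b c d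
  · obtain ⟨-, -, hav⟩ := ((linkGraph_adj hr).mp hab).resolve_left fun h => hva h.1
    obtain ⟨hvb, -⟩ := (linkGraph_adj_iff_of_in hr hav).mp hab
    obtain ⟨-, hcv⟩ := (linkGraph_adj_iff_of_out hr hvb).mp hbc
    obtain ⟨hvd, -⟩ := (linkGraph_adj_iff_of_in hr hcv).mp hcd
    exact (this hcd.symm hbc.symm hab.symm hvd).symm
  obtain ⟨hab, hbv⟩ := (linkGraph_adj_iff_of_out hr hva).mp hab
  obtain ⟨hvc, hcb⟩ := (linkGraph_adj_iff_of_in hr hbv).mp hbc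
  obtain ⟨hcd, hdv⟩ := (linkGraph_adj_iff_of_out hr hvc).mp hcd
  exact (linkGraph_adj_iff_of_out hr hva).mpr
    ⟨rel_of_link_path hr hD5 hC5 hva hab hbv hvc hcb hcd hdv, hdv⟩

lemma not_rel_iff_rel_of_linkGraph_adj (hr : IsTournament r) {v x y : V}
    (h : (linkGraph r v).Adj x y) : ¬ r x v ↔ r y v := by
  rcases (linkGraph_adj hr).mp h with ⟨hvx, -, hyv⟩ | ⟨hvy, -, hxv⟩
  · exact iff_of_true (hr.asymm hvx) hyv
  · exact iff_of_false (not_not.mpr hxv) (hr.asymm hvy)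

def linkColoring [DecidableRel r] (hr : IsTournament r) (v : V) : (linkGraph r v).Coloring Bool :=
  SimpleGraph.Coloring.mk (fun x => decide (r x v)) fun h => by
    rw [Ne, decide_eq_decide]
    exact not_iff.mpr (not_rel_iff_rel_of_linkGraph_adj hr h)

lemma linkColoring_apply [DecidableRel r] (hr : IsTournament r) (v x : V) :
    linkColoring hr v x = decide (r x v) :=
  rfl

lemma linkGraph_adj_iff_of_reachable (hr : IsTournament r) (hD5 : D5Free r)
    (hC5 : C5MinusFree r) {v x y : V} (hxy : (linkGraph r v).Reachable x y) :
    (linkGraph r v).Adj x y ↔ (¬ r x v ↔ r y v) := by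
  refine ⟨not_rel_iff_rel_of_linkGraph_adj hr, fun h => ?_⟩
  classical
  obtain ⟨p⟩ := hxy
  refine p.adj_of_odd_length (linkGraph_adj_of_path hr hD5 hC5) ?_
  rw [(linkColoring hr v).odd_length_iff_not_congr p, linkColoring_apply, linkColoring_apply]
  simpa using h

end Link

theorem stmt19_general {V : Type*} (r : V → V → Prop) (hr : IsTournament r)
    (hD5 : ¬ ∃ a b c d e : V,
      r a b ∧ r a c ∧ r d a ∧ r e a ∧ r b c ∧ r b d ∧ r b e ∧ r c d ∧ r e c ∧ r e d)
    (hC5 : ¬ ∃ v0 v1 v2 v3 v4 : V, v1 ≠ v4 ∧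
      Cyc r v0 v1 v2 ∧ Cyc r v1 v2 v3 ∧ Cyc r v2 v3 v4 ∧ Cyc r v3 v4 v0)
    (v : V) :
    ∀ c : (linkGraph r v).ConnectedComponent,
      ∃ A B : Set V, A ∪ B = c.supp ∧ A ∩ B = ∅ ∧
        ∀ x ∈ c.supp, ∀ y ∈ c.supp,
          ((linkGraph r v).Adj x y ↔ ((x ∈ A ∧ y ∈ B) ∨ (x ∈ B ∧ y ∈ A))) := by
  intro c
  refine ⟨{x ∈ c.supp | ¬ r x v}, {x ∈ c.supp | r x v}, ?_, ?_, fun x hx y hy => ?_⟩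
  · ext x
    simp only [Set.mem_union, Set.mem_ofPred_eq]
    tauto
  · ext x
    simp only [Set.mem_inter_iff, Set.mem_ofPred_eq, Set.mem_empty_iff_false, iff_false]
    tauto
  · rw [linkGraph_adj_iff_of_reachable hr hD5 hC5 (c.reachable_of_mem_supp hx hy)]
    simp only [Set.mem_ofPred_eq, hx, hy, true_and]
    tauto

/-- Claim 4.3: let `T` be a tournament containing no copy of `D₅`, whose 3-graph of
cyclic triangles contains no copy of `K₄⁻` and no copy of `C₅⁻`. Then for every
vertex `v`, every connected component of the link graph of `v` is complete
bipartite. -/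
theorem stmt19 {V : Type*} (r : V → V → Prop) (hr : IsTournament r)
    (hD5 : ¬ ∃ a b c d e : V,
      r a b ∧ r a c ∧ r d a ∧ r e a ∧ r b c ∧ r b d ∧ r b e ∧ r c d ∧ r e c ∧ r e d)
    (hK4 : ¬ ∃ a b c d : V, Cyc r a b c ∧ Cyc r a b d ∧ Cyc r a c d)
    (hC5 : ¬ ∃ v0 v1 v2 v3 v4 : V, v1 ≠ v4 ∧
      Cyc r v0 v1 v2 ∧ Cyc r v1 v2 v3 ∧ Cyc r v2 v3 v4 ∧ Cyc r v3 v4 v0)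
    (v : V) :
    ∀ c : (linkGraph r v).ConnectedComponent,
      ∃ A B : Set V, A ∪ B = c.supp ∧ A ∩ B = ∅ ∧
        ∀ x ∈ c.supp, ∀ y ∈ c.supp,
          ((linkGraph r v).Adj x y ↔ ((x ∈ A ∧ y ∈ B) ∨ (x ∈ B ∧ y ∈ A))) :=
  stmt19_general r hr hD5 hC5 v
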